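/- Let G be a finite simple graph, let G' be its triangle replacement, let t ∈ ℕ, and let S_s and S_g be vertex covers of G of size at most t. There exists a TAR reconfiguration sequence of vertex covers of G with upper threshold t from S_s to S_g if and only if there exists a TAR reconfiguration sequence of feedback vertex sets of G' with upper threshold t from S_s to S_g. -/

import Mathlib

/-!
STATEMENT 15: Let G be a finite simple graph, let G' be its triangle
replacement, let t ∈ ℕ, and let S_s and S_g be vertex covers of G of size at
most t. There exists a TAR reconfiguration sequence of vertex covers of G with
upper threshold t from S_s to S_g if and only if there exists a TAR
reconfiguration sequence of feedback vertex sets of G' with upper threshold t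
from S_s to S_g.

The triangle replacement is built on the vertex type `V ⊕ {e // e ∈ G.edgeSet}`:
`Sum.inl u` is the original vertex `u` and `Sum.inr e` is the new vertex `x_e`
added for the edge `e`; the sets `S_s, S_g ⊆ V` are viewed in `G'` via
`Finset.image Sum.inl`.
-/

/-- `S` is a vertex cover of `G`. -/
def IsVC {V : Type} (G : SimpleGraph V) (S : Finset V) : Prop :=
  ∀ ⦃u v : V⦄, G.Adj u v → u ∈ S ∨ v ∈ S

/-- `S` is a feedback vertex set of `H`: it meets every cycle of `H`. -/
def IsFVS {W : Type} [DecidableEq W] (H : SimpleGraph W) (S : Finset W) : Prop :=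
  ∀ (v : W) (c : H.Walk v v), c.IsCycle → ∃ u ∈ c.support, u ∈ S

/-- One TAR step: `S'` is obtained from `S` by adding or removing exactly one
vertex. -/
def TarStep {V : Type} [DecidableEq V] (S S' : Finset V) : Prop :=
  ∃ x, (x ∉ S ∧ S' = insert x S) ∨ (x ∈ S ∧ S' = S.erase x)

/-- The triangle replacement `G'` of `G`: for every edge `e = {u,v}` of `G`, a
new vertex `x_e` adjacent to `u` and to `v` is added (keeping all edges of
`G`). -/
def TriRep {V : Type} (G : SimpleGraph V) :
    SimpleGraph (V ⊕ {e : Sym2 V // e ∈ G.edgeSet}) where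
  Adj a b :=
    match a, b with
    | .inl u, .inl v => G.Adj u v
    | .inl u, .inr e => u ∈ (e : Sym2 V)
    | .inr e, .inl u => u ∈ (e : Sym2 V)
    | .inr _, .inr _ => False
  symm := by
    constructor
    rintro (u | e) (v | f) h
    · exact G.adj_symm h
    · exact h
    · exact h
    · exact h.elim
  loopless := by
    constructor
    rintro (u | e) h
    · exact G.irrefl h
    · exact h

/-!
A vertex cover `S` of `G` is, inside `G'`, a feedback vertex set: a cycle of `G'` either uses an
edge of `G` or passes through some `x_e`, and then its two neighbours there are the endpoints of
`e`; either way it contains both ends of an edge of `G`. Conversely, sending every `x_e` to one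
endpoint of `e` maps a feedback vertex set of `G'` onto a vertex cover of `G` that is no larger,
because the triangle `u x_e w` must be hit. Both maps turn a TAR step into a TAR step or (for the
second one) possibly into no step at all, so they transport reconfiguration sequences.
-/

open SimpleGraph Relation

theorem exists_fin_seq_iff_reflTransGen {α : Type*} (P : α → Prop) (R : α → α → Prop)
    {a b : α} :
    (∃ (m : ℕ) (A : Fin (m + 1) → α), A 0 = a ∧ A (Fin.last m) = b ∧ (∀ i, P (A i)) ∧
        ∀ i : Fin m, R (A i.castSucc) (A i.succ)) ↔
      P a ∧ ReflTransGen (fun x y => R x y ∧ P y) a b := by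
  constructor
  · rintro ⟨m, A, rfl, rfl, hP, hR⟩
    refine ⟨hP 0, ?_⟩
    induction m with
    | zero => rfl
    | succ m ih =>
      refine .tail (ih (fun i => A i.castSucc) (fun i => hP _) fun i => ?_) ⟨?_, hP _⟩
      · simpa only [Fin.succ_castSucc] using hR i.castSucc
      · simpa only [Fin.succ_last] using hR (Fin.last m)
  · rintro ⟨ha, h⟩
    induction h with
    | refl => exact ⟨0, fun _ => a, rfl, rfl, fun _ => ha, fun i => i.elim0⟩
    | @tail c d _ hcd ih =>
      obtain ⟨m, A, hA0, hAm, hP, hR⟩ := ih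
      refine ⟨m + 1, Fin.snoc A d, ?_, Fin.snoc_last _ _, Fin.lastCases ?_ fun i => ?_,
        Fin.lastCases ?_ fun i => ?_⟩
      · exact hA0
      · simpa using hcd.2
      · simpa using hP i
      · simpa [hAm] using hcd.1
      · rw [Fin.succ_castSucc, Fin.snoc_castSucc, Fin.snoc_castSucc]
        exact hR i

section TarStep

variable {α β : Type} [DecidableEq α] [DecidableEq β] {S S' : Finset α}

theorem TarStep.image_of_injective {f : α → β} (hf : Function.Injective f)
    (h : TarStep S S') : TarStep (S.image f) (S'.image f) := by
  obtain ⟨x, ⟨hx, rfl⟩ | ⟨hx, rfl⟩⟩ := h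
  · exact ⟨f x, .inl ⟨by simpa [hf.eq_iff] using hx, Finset.image_insert _ _ _⟩⟩
  · exact ⟨f x, .inr ⟨Finset.mem_image_of_mem _ hx, Finset.image_erase hf _ _⟩⟩

theorem TarStep.image_eq_or_tarStep_image (f : α → β) (h : TarStep S S') :
    S.image f = S'.image f ∨ TarStep (S.image f) (S'.image f) := by
  obtain ⟨x, ⟨-, rfl⟩ | ⟨hx, rfl⟩⟩ := h
  · rw [Finset.image_insert]
    by_cases hfx : f x ∈ S.image f
    · exact .inl (Finset.insert_eq_self.mpr hfx).symm
    · exact .inr ⟨f x, .inl ⟨hfx, rfl⟩⟩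
  · by_cases hfx : f x ∈ (S.erase x).image f
    · left
      conv_lhs => rw [← Finset.insert_erase hx]
      rw [Finset.image_insert, Finset.insert_eq_self.mpr hfx]
    · refine .inr ⟨f x, .inr ⟨Finset.mem_image_of_mem _ hx, subset_antisymm (fun z hz => ?_)
        (Finset.erase_image_subset_image_erase f S x)⟩⟩
      exact Finset.mem_erase.mpr
        ⟨fun h => hfx (h ▸ hz), Finset.image_subset_image (S.erase_subset x) hz⟩

end TarStep

theorem SimpleGraph.Walk.isCycle_triangle {W : Type*} {H : SimpleGraph W} {a b c : W}
    (hab : H.Adj a b) (hbc : H.Adj b c) (hca : H.Adj c a) :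
    (cons hab (cons hbc (cons hca nil))).IsCycle := by
  rw [Walk.isCycle_def, Walk.isTrail_def]
  refine ⟨?_, by simp, ?_⟩
  · simp [hab.ne, hbc.ne, hca.ne, hab.ne.symm, hca.ne.symm]
  · simp [hbc.ne, hca.ne, hab.ne.symm]

namespace TriRep

variable {V : Type} {G : SimpleGraph V}

variable (G) in
noncomputable def proj : V ⊕ {e : Sym2 V // e ∈ G.edgeSet} → V :=
  Sum.elim id fun e => (e : Sym2 V).out.1

theorem proj_inr_mem (e : {e : Sym2 V // e ∈ G.edgeSet}) : proj G (.inr e) ∈ (e : Sym2 V) :=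
  Sym2.out_fst_mem _

theorem adj_inl_inl {u w : V} : (TriRep G).Adj (.inl u) (.inl w) ↔ G.Adj u w := Iff.rfl

theorem exists_eq_inl_of_adj_inr {e : {e : Sym2 V // e ∈ G.edgeSet}}
    {x : V ⊕ {e : Sym2 V // e ∈ G.edgeSet}} (h : (TriRep G).Adj (.inr e) x) :
    ∃ u ∈ (e : Sym2 V), x = .inl u := by
  rcases x with u | f
  · exact ⟨u, h, rfl⟩
  · exact h.elim

/-- The two neighbours of `x_e` on a cycle through it are the two endpoints of `e`. -/
theorem exists_adj_mem_support_of_isCycle_inr (e : {e : Sym2 V // e ∈ G.edgeSet})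
    (c : (TriRep G).Walk (.inr e) (.inr e)) (hc : c.IsCycle) :
    ∃ u w, G.Adj u w ∧ .inl u ∈ c.support ∧ .inl w ∈ c.support := by
  obtain ⟨u, hu, hsnd⟩ := exists_eq_inl_of_adj_inr (c.adj_snd hc.not_nil)
  obtain ⟨w, hw, hpen⟩ := exists_eq_inl_of_adj_inr (c.adj_penultimate hc.not_nil).symm
  have huw : u ≠ w := fun h => hc.snd_ne_penultimate (by rw [hsnd, hpen, h])
  have hadj : G.Adj u w := by
    simpa [(Sym2.mem_and_mem_iff huw).mp ⟨hu, hw⟩] using e.2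
  exact ⟨u, w, hadj, hsnd ▸ c.getVert_mem_support 1, hpen ▸ c.getVert_mem_support _⟩

variable [DecidableEq V]

theorem exists_adj_mem_support_of_isCycle {v : V ⊕ {e : Sym2 V // e ∈ G.edgeSet}}
    (c : (TriRep G).Walk v v) (hc : c.IsCycle) :
    ∃ u w, G.Adj u w ∧ .inl u ∈ c.support ∧ .inl w ∈ c.support := by
  rcases v with u | e
  · rcases hsnd : c.snd with w | e
    · exact ⟨u, w, adj_inl_inl.mp (hsnd ▸ c.adj_snd hc.not_nil), c.start_mem_support,
        hsnd ▸ c.getVert_mem_support 1⟩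
    · have he : .inr e ∈ c.support := hsnd ▸ c.getVert_mem_support 1
      simpa using exists_adj_mem_support_of_isCycle_inr e (c.rotate _ he) (hc.rotate he)
  · exact exists_adj_mem_support_of_isCycle_inr e c hc

theorem isFVS_image_inl {S : Finset V} (hS : IsVC G S) : IsFVS (TriRep G) (S.image .inl) := by
  intro v c hc
  obtain ⟨u, w, hadj, hu, hw⟩ := exists_adj_mem_support_of_isCycle c hc
  rcases hS hadj with h | h
  · exact ⟨.inl u, hu, Finset.mem_image_of_mem _ h⟩
  · exact ⟨.inl w, hw, Finset.mem_image_of_mem _ h⟩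

theorem image_proj_image_inl (S : Finset V) : (S.image .inl).image (proj G) = S := by
  rw [Finset.image_image]
  exact Finset.image_id

theorem isVC_image_proj {B : Finset (V ⊕ {e : Sym2 V // e ∈ G.edgeSet})}
    (hB : IsFVS (TriRep G) B) : IsVC G (B.image (proj G)) := by
  intro u w huw
  let e : {e : Sym2 V // e ∈ G.edgeSet} := ⟨s(u, w), huw⟩
  have hue : (TriRep G).Adj (.inl u) (.inr e) := Sym2.mem_mk_left u w
  have hew : (TriRep G).Adj (.inr e) (.inl w) := Sym2.mem_mk_right u w
  obtain ⟨x, hx, hxB⟩ := hB _ _ (Walk.isCycle_triangle hue hew (adj_inl_inl.mpr huw.symm))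
  have hproj := Finset.mem_image_of_mem (proj G) hxB
  simp only [Walk.support_cons, Walk.support_nil, List.mem_cons, List.not_mem_nil,
    or_false] at hx
  rcases hx with rfl | rfl | rfl | rfl
  · exact .inl hproj
  · rcases Sym2.mem_iff.mp (proj_inr_mem e) with h | h
    · exact .inl (h ▸ hproj)
    · exact .inr (h ▸ hproj)
  · exact .inr hproj
  · exact .inl hproj

end TriRep

theorem stmt15_general {V : Type} [DecidableEq V] (G : SimpleGraph V)
    (t : ℕ) (Ss Sg : Finset V) :
    (∃ (m : ℕ) (A : Fin (m + 1) → Finset V),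
        A 0 = Ss ∧ A (Fin.last m) = Sg ∧
        (∀ i, IsVC G (A i) ∧ (A i).card ≤ t) ∧
        ∀ i : Fin m, TarStep (A i.castSucc) (A i.succ)) ↔
    (∃ (m : ℕ) (B : Fin (m + 1) → Finset (V ⊕ {e : Sym2 V // e ∈ G.edgeSet})),
        B 0 = Ss.image Sum.inl ∧ B (Fin.last m) = Sg.image Sum.inl ∧
        (∀ i, IsFVS (TriRep G) (B i) ∧ (B i).card ≤ t) ∧
        ∀ i : Fin m, TarStep (B i.castSucc) (B i.succ)) := by
  rw [exists_fin_seq_iff_reflTransGen (fun S => IsVC G S ∧ S.card ≤ t),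
    exists_fin_seq_iff_reflTransGen (fun B => IsFVS (TriRep G) B ∧ B.card ≤ t)]
  have image_inl : ∀ S : Finset V, IsVC G S ∧ S.card ≤ t →
      IsFVS (TriRep G) (S.image Sum.inl) ∧
        (S.image (Sum.inl (β := {e : Sym2 V // e ∈ G.edgeSet}))).card ≤ t := fun S hS =>
    ⟨TriRep.isFVS_image_inl hS.1,
      (Finset.card_image_of_injective S Sum.inl_injective).trans_le hS.2⟩
  have image_proj : ∀ B, IsFVS (TriRep G) B ∧ B.card ≤ t →
      IsVC G (B.image (TriRep.proj G)) ∧ (B.image (TriRep.proj G)).card ≤ t := fun B hB =>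
    ⟨TriRep.isVC_image_proj hB.1, Finset.card_image_le.trans hB.2⟩
  constructor
  · rintro ⟨hS, h⟩
    exact ⟨image_inl _ hS, h.lift _ fun S S' ⟨hstep, hS'⟩ =>
      ⟨hstep.image_of_injective Sum.inl_injective, image_inl _ hS'⟩⟩
  · rintro ⟨hB, h⟩
    rw [← TriRep.image_proj_image_inl (G := G) Ss, ← TriRep.image_proj_image_inl (G := G) Sg]
    refine ⟨image_proj _ hB, h.lift' _ fun B B' ⟨hstep, hB'⟩ => ?_⟩
    rcases hstep.image_eq_or_tarStep_image (TriRep.proj G) with heq | hstep'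
    · rw [Function.onFun, heq]
    · exact .single ⟨hstep', image_proj _ hB'⟩

theorem stmt15 {V : Type} [Fintype V] [DecidableEq V] (G : SimpleGraph V)
    (t : ℕ) (Ss Sg : Finset V)
    (hs : IsVC G Ss ∧ Ss.card ≤ t) (hg : IsVC G Sg ∧ Sg.card ≤ t) :
    (∃ (m : ℕ) (A : Fin (m + 1) → Finset V),
        A 0 = Ss ∧ A (Fin.last m) = Sg ∧
        (∀ i, IsVC G (A i) ∧ (A i).card ≤ t) ∧
        ∀ i : Fin m, TarStep (A i.castSucc) (A i.succ)) ↔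
    (∃ (m : ℕ) (B : Fin (m + 1) → Finset (V ⊕ {e : Sym2 V // e ∈ G.edgeSet})),
        B 0 = Ss.image Sum.inl ∧ B (Fin.last m) = Sg.image Sum.inl ∧
        (∀ i, IsFVS (TriRep G) (B i) ∧ (B i).card ≤ t) ∧
        ∀ i : Fin m, TarStep (B i.castSucc) (B i.succ)) :=
  stmt15_general G t Ss Sg
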